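/- arXiv:1609.01817 — 4 statements merged into one kernel-verified Lean document; each statement's English description precedes it below -/
import Mathlib

section
/- Let p = mk + 1 be prime with k even, g a primitive root mod p, and X_i = g^i X_0 the cosets of the index-m multiplicative subgroup X_0. Suppose (X_0 - 1) ∩ X_0 = ∅, and for all pairs (i, j) with 0 ≤ i, j < m not both zero, (X_0 - g^j) ∩ X_i ≠ ∅. Then: (a) X_i is closed under negation for all i; (b) X_i + X_i = (Z/pZ) \ X_i for all i; and (c) X_i + X_j = (Z/pZ) \ {0} for all i ≠ j. -/
/-!
Since `ω = g ^ k` is a primitive `m`-th root of unity, the coset `X i` is the fibre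
`{x | x ^ k = ω ^ i}` of the `k`-th power map. The fibres are disjoint, cover the nonzero residues,
and are closed under negation because `k` is even. Multiplying by an element of `X r` maps each
`X i` onto `X (i + r)` (indices mod `m`), so a witness `y ∈ X 0` with `y - g ^ j ∈ X i`, that is
`y ∈ X i + X j`, propagates to `X r ⊆ X (i + r) + X (j + r)`; this gives the inclusions `⊇` in (b)
and (c). Conversely, `x + y = z` inside one coset would make `z / x ∈ X 0` and `z / x - 1 = y / x ∈ X 0`,
and `x + y = 0` forces `y = -x` into the coset of `x`.
-/

open Pointwise

section PowFibres

variable {F : Type*} [Field F] {k : ℕ}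

theorem neg_setOf_pow_eq (hk : Even k) (c : F) : -{x : F | x ^ k = c} = {x | x ^ k = c} := by
  ext x
  simp [hk.neg_pow]

theorem zero_mem_add_setOf_pow_eq (hk : Even k) {x c : F} (hx : x ^ k = c) :
    (0 : F) ∈ {x : F | x ^ k = c} + {x | x ^ k = c} :=
  ⟨x, hx, -x, by rwa [Set.mem_ofPred_eq, hk.neg_pow], add_neg_cancel x⟩

theorem zero_notMem_add_setOf_pow_eq (hk : Even k) {a b : F} (hab : a ≠ b) :
    (0 : F) ∉ {x : F | x ^ k = a} + {x | x ^ k = b} := by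
  rintro ⟨x, hx, y, hy, hxy⟩
  rw [Set.mem_ofPred_eq, eq_neg_of_add_eq_zero_right hxy, hk.neg_pow, hx] at hy
  exact hab hy

theorem disjoint_add_setOf_pow_eq (hk : k ≠ 0) (hshift : ∀ x : F, x ^ k = 1 → (x - 1) ^ k ≠ 1)
    {c : F} (hc : c ≠ 0) :
    Disjoint ({x : F | x ^ k = c} + {x | x ^ k = c}) {x | x ^ k = c} := by
  rw [Set.disjoint_left]
  rintro _ ⟨x, hx, y, hy, rfl⟩ (hxy : (x + y) ^ k = c)
  have hx0 : x ≠ 0 := by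
    rintro rfl
    exact hc (by rw [← hx, zero_pow hk])
  refine hshift ((x + y) / x) (by rw [div_pow, hxy, hx, div_self hc]) ?_
  rw [div_sub_one hx0, add_sub_cancel_left, div_pow, hx, hy, div_self hc]

theorem mem_add_setOf_pow_eq (hk : k ≠ 0) {y t a b : F} (hy : y ^ k = 1)
    (hyt : (y - t) ^ k = a) (ht : t ^ k = b) {z c : F} (hz : z ^ k = c) :
    z ∈ {x : F | x ^ k = c * a} + {x | x ^ k = c * b} := by
  have hy0 : y ≠ 0 := by
    rintro rfl
    exact zero_ne_one (by rw [← hy, zero_pow hk])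
  refine ⟨z / y * (y - t), ?_, z / y * t, ?_, ?_⟩
  · simp only [Set.mem_ofPred_eq, mul_pow, div_pow, hz, hy, div_one, hyt]
  · simp only [Set.mem_ofPred_eq, mul_pow, div_pow, hz, hy, div_one, ht]
  · change z / y * (y - t) + z / y * t = z
    rw [← mul_add, sub_add_cancel, div_mul_cancel₀ z hy0]

theorem exists_pow_mul_pow_eq {M : Type*} [Monoid M] {ω : M} {m i r : ℕ} (hω : ω ^ m = 1)
    (hi : i < m) (hr : r < m) : ∃ i' < m, ω ^ r * ω ^ i' = ω ^ i ∧ (i' = 0 → i = r) := by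
  by_cases hri : r ≤ i
  · exact ⟨i - r, by omega, by rw [← pow_add, Nat.add_sub_cancel' hri], by omega⟩
  · refine ⟨i + m - r, by omega, ?_, by omega⟩
    rw [← pow_add, show r + (i + m - r) = i + m by omega, pow_add, hω, mul_one]

theorem setOf_pow_eq_subset_add (hk : k ≠ 0) {g : F} {m : ℕ} (hg : (g ^ k) ^ m = 1)
    (hwit : ∀ i < m, ∀ j < m, ¬(i = 0 ∧ j = 0) →
      ∃ y : F, y ^ k = 1 ∧ (y - g ^ j) ^ k = (g ^ k) ^ i)
    ⦃i j r : ℕ⦄ (hi : i < m) (hj : j < m) (hr : r < m) (hijr : ¬(i = r ∧ j = r)) :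
    {x : F | x ^ k = (g ^ k) ^ r} ⊆ {x | x ^ k = (g ^ k) ^ i} + {x | x ^ k = (g ^ k) ^ j} := by
  obtain ⟨i', hi', hri, hi0⟩ := exists_pow_mul_pow_eq hg hi hr
  obtain ⟨j', hj', hrj, hj0⟩ := exists_pow_mul_pow_eq hg hj hr
  obtain ⟨y, hy, hyg⟩ := hwit i' hi' j' hj' fun h ↦ hijr ⟨hi0 h.1, hj0 h.2⟩
  intro z hz
  rw [← hri, ← hrj]
  exact mem_add_setOf_pow_eq hk hy hyg (pow_right_comm g j' k) hz

theorem IsPrimitiveRoot.setOf_exists_pow_mul_add_eq {g : F} {m : ℕ} (hmk : 0 < m * k)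
    (hg : IsPrimitiveRoot g (m * k)) (i : ℕ) :
    {x | ∃ a < k, x = g ^ (a * m + i)} = {x : F | x ^ k = (g ^ k) ^ i} := by
  have hg0 : g ≠ 0 := hg.ne_zero hmk.ne'
  have : NeZero k := ⟨(Nat.pos_of_mul_pos_left hmk).ne'⟩
  ext x
  constructor
  · rintro ⟨a, -, rfl⟩
    rw [Set.mem_ofPred_eq, ← pow_mul, ← pow_mul, show (a * m + i) * k = m * k * a + k * i by ring,
      pow_add, pow_mul, hg.pow_eq_one, one_pow, one_mul]
  · intro (hx : x ^ k = (g ^ k) ^ i)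
    have hxg : (x / g ^ i) ^ k = 1 := by
      rw [div_pow, hx, pow_right_comm, div_self (pow_ne_zero _ (pow_ne_zero _ hg0))]
    obtain ⟨a, ha, hga⟩ := (hg.pow hmk rfl).eq_pow_of_pow_eq_one hxg
    refine ⟨a, ha, ?_⟩
    rw [pow_add, mul_comm a, pow_mul, hga, div_mul_cancel₀ x (pow_ne_zero _ hg0)]

end PowFibres

theorem stmt_4 (m k : ℕ) (hm : 0 < m) (hk : 0 < k) (hke : Even k)
    (hp : Nat.Prime (m * k + 1)) (g : ZMod (m * k + 1))
    (hg : IsPrimitiveRoot g (m * k))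
    (X : ℕ → Set (ZMod (m * k + 1)))
    (hX : ∀ i, X i = {x | ∃ a < k, x = g ^ (a * m + i)})
    (h1 : ((fun x => x - 1) '' X 0) ∩ X 0 = ∅)
    (h2 : ∀ i < m, ∀ j < m, ¬(i = 0 ∧ j = 0) →
      (((fun x => x - g ^ j) '' X 0) ∩ X i).Nonempty) :
    (∀ i < m, X i = -X i) ∧
    (∀ i < m, X i + X i = (X i)ᶜ) ∧
    (∀ i < m, ∀ j < m, i ≠ j → X i + X j = ({0}ᶜ : Set (ZMod (m * k + 1)))) := by
  have : Fact (m * k + 1).Prime := ⟨hp⟩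
  have : NeZero m := ⟨hm.ne'⟩
  have hmk : 0 < m * k := Nat.mul_pos hm hk
  have hω : IsPrimitiveRoot (g ^ k) m := hg.pow hmk (mul_comm m k)
  obtain rfl : X = fun i ↦ {x | x ^ k = (g ^ k) ^ i} :=
    funext fun i ↦ (hX i).trans (hg.setOf_exists_pow_mul_add_eq hmk i)
  have h1' : ∀ x : ZMod (m * k + 1), x ^ k = 1 → (x - 1) ^ k ≠ 1 := fun x hx hx1 ↦
    h1.subset ⟨⟨x, by simpa using hx, rfl⟩, by simpa using hx1⟩
  have h2' : ∀ i < m, ∀ j < m, ¬(i = 0 ∧ j = 0) →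
      ∃ y : ZMod (m * k + 1), y ^ k = 1 ∧ (y - g ^ j) ^ k = (g ^ k) ^ i := by
    intro i hi j hj hij
    obtain ⟨_, ⟨y, hy, rfl⟩, hyi⟩ := h2 i hi j hj hij
    exact ⟨y, by simpa using hy, hyi⟩
  have cover := setOf_pow_eq_subset_add hk.ne' hω.pow_eq_one h2'
  have exists_fibre : ∀ z : ZMod (m * k + 1), z ≠ 0 → ∃ r < m, z ^ k = (g ^ k) ^ r := by
    intro z hz
    obtain ⟨r, hr, hzr⟩ := hω.eq_pow_of_pow_eq_one (ξ := z ^ k)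
      (by simpa [← pow_mul, mul_comm] using ZMod.pow_card_sub_one_eq_one hz)
    exact ⟨r, hr, hzr.symm⟩
  refine ⟨fun i _ ↦ (neg_setOf_pow_eq hke _).symm, fun i hi ↦ ?_, fun i hi j hj hij ↦ ?_⟩
  · refine (Set.subset_compl_iff_disjoint_right.2
      (disjoint_add_setOf_pow_eq hk.ne' h1' (pow_ne_zero i (hω.ne_zero hm.ne')))).antisymm ?_
    intro z (hz : ¬z ^ k = (g ^ k) ^ i)
    obtain rfl | hz0 := eq_or_ne z 0
    · exact zero_mem_add_setOf_pow_eq hke (pow_right_comm g i k)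
    · obtain ⟨r, hr, hzr⟩ := exists_fibre z hz0
      exact cover hi hi hr (fun h ↦ hz (h.1 ▸ hzr)) hzr
  · ext z
    refine ⟨?_, fun hz ↦ ?_⟩
    · rintro hz (rfl : z = 0)
      exact zero_notMem_add_setOf_pow_eq hke (fun h ↦ hij (hω.pow_inj hi hj h)) hz
    · obtain ⟨r, hr, hzr⟩ := exists_fibre z hz
      exact cover hi hj hr (fun h ↦ hij (h.1.trans h.2.symm)) hzr
end

section
/- Let p be prime and A ⊆ Z/pZ with |A| = δp > 0. If A is α-uniform with α < δ², then A is not sum-free, i.e., there exist x, y, z ∈ A with x + y = z. -/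
/-!
Write `F(t) = ∑_{x ∈ A} e(tx/p)`. Orthogonality of characters gives
`∑_t F(t)² F(-t) = p · #{(x, y) ∈ A² : x + y ∈ A}`, which vanishes when `A` is sum-free.
The term `t = 0` equals `|A|³`, every other term has modulus at most `αp · |F(t)|²`, and
Parseval gives `∑_t |F(t)|² = p|A|`. Hence `|A|³ ≤ αp²|A|`, that is, `δ² ≤ α`.
-/

open Finset

section

variable {R : Type*} [CommRing R]

def charSum (ψ : AddChar R ℂ) (A : Finset R) (t : R) : ℂ := ∑ x ∈ A, ψ (t * x)

namespace charSum

variable {ψ : AddChar R ℂ} (A : Finset R)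

@[simp]
lemma apply_zero : charSum ψ A 0 = #A := by
  simp [charSum]

variable [Fintype R]

lemma apply_neg (t : R) : charSum ψ A (-t) = starRingEnd ℂ (charSum ψ A t) := by
  simp only [charSum, map_sum, ← AddChar.map_neg_eq_conj, neg_mul]

variable [DecidableEq R]

lemma sum_mul_conj (hψ : ψ.IsPrimitive) :
    ∑ t, charSum ψ A t * starRingEnd ℂ (charSum ψ A t) = Fintype.card R * #A := by
  have hexpand : ∀ t, charSum ψ A t * starRingEnd ℂ (charSum ψ A t) =
      ∑ x ∈ A, ∑ y ∈ A, ψ (t * (x - y)) := by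
    intro t
    rw [← apply_neg, charSum, charSum, sum_mul_sum]
    refine sum_congr rfl fun x _ => sum_congr rfl fun y _ => ?_
    rw [← AddChar.map_add_eq_mul]
    ring_nf
  calc ∑ t, charSum ψ A t * starRingEnd ℂ (charSum ψ A t)
      = ∑ x ∈ A, ∑ y ∈ A, ∑ t, ψ (t * (x - y)) := by
        simp_rw [hexpand]
        rw [sum_comm]
        exact sum_congr rfl fun x _ => sum_comm
    _ = ∑ x ∈ A, ∑ y ∈ A, if x = y then (Fintype.card R : ℂ) else 0 := by
        simp only [AddChar.sum_mulShift _ hψ, sub_eq_zero, Nat.cast_ite, Nat.cast_zero]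
    _ = Fintype.card R * #A := by
        simp [sum_ite_eq, mul_comm]

lemma sum_norm_sq (hψ : ψ.IsPrimitive) :
    ∑ t, ‖charSum ψ A t‖ ^ 2 = Fintype.card R * #A := by
  have h := sum_mul_conj A hψ
  simp_rw [Complex.mul_conj, ← Complex.sq_norm] at h
  exact_mod_cast h

lemma sum_sq_mul_apply_neg (hψ : ψ.IsPrimitive) :
    ∑ t, charSum ψ A t ^ 2 * charSum ψ A (-t) =
      Fintype.card R * #{q ∈ A ×ˢ A | q.1 + q.2 ∈ A} := by
  have hexpand : ∀ t, charSum ψ A t ^ 2 * charSum ψ A (-t) =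
      ∑ x ∈ A, ∑ y ∈ A, ∑ z ∈ A, ψ (t * (x + y - z)) := by
    intro t
    rw [charSum, charSum, sq, sum_mul_sum, sum_mul]
    simp_rw [sum_mul, mul_sum]
    refine sum_congr rfl fun x _ => sum_congr rfl fun y _ => sum_congr rfl fun z _ => ?_
    rw [← AddChar.map_add_eq_mul, ← AddChar.map_add_eq_mul]
    ring_nf
  calc ∑ t, charSum ψ A t ^ 2 * charSum ψ A (-t)
      = ∑ x ∈ A, ∑ y ∈ A, ∑ z ∈ A, ∑ t, ψ (t * (x + y - z)) := by
        simp_rw [hexpand]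
        rw [sum_comm]
        refine sum_congr rfl fun x _ => ?_
        rw [sum_comm]
        exact sum_congr rfl fun y _ => sum_comm
    _ = ∑ x ∈ A, ∑ y ∈ A, if x + y ∈ A then (Fintype.card R : ℂ) else 0 := by
        simp only [AddChar.sum_mulShift _ hψ, sub_eq_zero, Nat.cast_ite, Nat.cast_zero,
          sum_ite_eq]
    _ = Fintype.card R * #{q ∈ A ×ˢ A | q.1 + q.2 ∈ A} := by
        rw [card_filter, sum_product]
        push_cast
        simp only [mul_sum, mul_ite, mul_one, mul_zero]

lemma card_pow_three_le_of_add_notMem (hψ : ψ.IsPrimitive) (hA : ∀ x ∈ A, ∀ y ∈ A, x + y ∉ A)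
    {M : ℝ} (hM₀ : 0 ≤ M) (hM : ∀ t ≠ 0, ‖charSum ψ A t‖ ≤ M) :
    (#A : ℝ) ^ 3 ≤ M * (Fintype.card R * #A) := by
  set F := charSum ψ A
  have hzero : ∑ t, F t ^ 2 * F (-t) = 0 := by
    rw [sum_sq_mul_apply_neg A hψ,
      filter_false_of_mem fun q hq => hA _ (mem_product.1 hq).1 _ (mem_product.1 hq).2]
    simp
  have hsplit : (#A : ℂ) ^ 3 = -∑ t ∈ univ.erase 0, F t ^ 2 * F (-t) := by
    rw [← add_sum_erase _ _ (mem_univ 0), neg_zero, show F 0 = #A from apply_zero A] at hzero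
    linear_combination hzero
  calc (#A : ℝ) ^ 3 = ‖∑ t ∈ univ.erase 0, F t ^ 2 * F (-t)‖ := by
        rw [← norm_neg, ← hsplit, norm_pow, Complex.norm_natCast]
    _ ≤ ∑ t ∈ univ.erase 0, ‖F t‖ ^ 2 * M := by
        refine norm_sum_le_of_le _ fun t ht => ?_
        rw [norm_mul, norm_pow]
        exact mul_le_mul_of_nonneg_left (hM _ (neg_ne_zero.mpr (ne_of_mem_erase ht)))
          (by positivity)
    _ ≤ ∑ t, ‖F t‖ ^ 2 * M :=
        sum_le_sum_of_subset_of_nonneg (erase_subset _ _) fun _ _ _ => by positivity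
    _ = M * (Fintype.card R * #A) := by
        rw [← sum_mul, sum_norm_sq A hψ, mul_comm]

end charSum

end

lemma ZMod.stdAddChar_neg_mul {N : ℕ} [NeZero N] (s x : ZMod N) :
    stdAddChar (-(s * x)) = Complex.exp (-2 * Real.pi * Complex.I * (s.val * x.val) / N) := by
  have hcast : -(s * x) = ((-(s.val * x.val : ℤ) : ℤ) : ZMod N) := by
    push_cast
    rw [ZMod.natCast_val, ZMod.natCast_val, ZMod.cast_id, ZMod.cast_id]
  rw [hcast, ZMod.stdAddChar_coe]
  push_cast
  ring_nf

lemma ZMod.charSum_stdAddChar {N : ℕ} [NeZero N] (A : Finset (ZMod N)) (t : ZMod N) :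
    charSum stdAddChar A t =
      ∑ x ∈ A, Complex.exp (-2 * Real.pi * Complex.I * ((-t).val * x.val) / N) :=
  sum_congr rfl fun x _ => by rw [← stdAddChar_neg_mul, neg_mul, neg_neg]

theorem stmt_7 (p : ℕ) (hp : Nat.Prime p) (A : Finset (ZMod p))
    (hA : A.Nonempty)
    (δ α : ℝ) (hδ : δ = (A.card : ℝ) / p) (hα : 0 ≤ α)
    (huniform : ∀ t : ZMod p, t ≠ 0 →
      ‖(∑ x ∈ A, Complex.exp (-2 * Real.pi * Complex.I * (t.val * x.val) / p))‖
        ≤ α * p)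
    (hαδ : α < δ ^ 2) :
    ∃ x ∈ A, ∃ y ∈ A, ∃ z ∈ A, x + y = z := by
  have : NeZero p := ⟨hp.ne_zero⟩
  by_contra! hfree
  have hbound := charSum.card_pow_three_le_of_add_notMem A (ZMod.isPrimitive_stdAddChar p)
    (fun x hx y hy hxy => hfree x hx y hy _ hxy rfl) (M := α * p) (by positivity) fun t ht => by
      simpa only [ZMod.charSum_stdAddChar] using huniform (-t) (neg_ne_zero.mpr ht)
  rw [ZMod.card] at hbound
  have hp₀ : (0 : ℝ) < p := by exact_mod_cast hp.pos
  have hA₀ : (0 : ℝ) < #A := by exact_mod_cast hA.card_pos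
  rw [hδ, div_pow, lt_div_iff₀ (by positivity)] at hαδ
  nlinarith
end

section
/- Let p be prime, m dividing (p-1)/2 with (p-1)/m even, and H the multiplicative subgroup of (Z/pZ)^× of index m. If H is p^{-1/2}-uniform and p > m⁴ + 5, then H is not sum-free. -/
/-!
If `H` were sum-free, the sum `∑ₜ Ĥ(t)² conj Ĥ(t)`, which is `p` times the number of solutions of
`x + y = z` in `H`, would vanish. Its `t = 0` term is `|H|³`, and by uniformity and Parseval the
other terms have total size at most `√p · p|H|`, so `|H|² ≤ p^{3/2}`. On the other hand
`x ↦ x^m` is at most `m`-to-one, so `|H| ≥ (p - 1)/m`, and together `(p - 1)⁴ ≤ m⁴ p³`, which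
fails once `p ≥ m⁴ + 6`.
-/

open Finset ComplexConjugate

section ExpSum

variable {R : Type*} [CommRing R]

noncomputable def expSum (ψ : AddChar R ℂ) (A : Finset R) (t : R) : ℂ :=
  ∑ x ∈ A, ψ (t * x)

lemma expSum_zero (ψ : AddChar R ℂ) (A : Finset R) : expSum ψ A 0 = #A := by
  simp [expSum]

variable [Fintype R]

lemma conj_expSum (ψ : AddChar R ℂ) (A : Finset R) (t : R) :
    conj (expSum ψ A t) = ∑ x ∈ A, ψ (t * -x) := by
  simp [expSum, AddChar.map_neg_eq_conj]

lemma expSum_mul_conj (ψ : AddChar R ℂ) (A : Finset R) (t : R) :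
    expSum ψ A t * conj (expSum ψ A t) = ∑ x ∈ A, ∑ y ∈ A, ψ (t * (x - y)) := by
  rw [conj_expSum, expSum, sum_mul_sum]
  simp only [← AddChar.map_add_eq_mul, ← mul_add, sub_eq_add_neg]

lemma expSum_sq_mul_conj (ψ : AddChar R ℂ) (A : Finset R) (t : R) :
    expSum ψ A t ^ 2 * conj (expSum ψ A t) = ∑ x ∈ A, ∑ y ∈ A, ∑ z ∈ A, ψ (t * (x + y - z)) := by
  rw [conj_expSum, expSum, sq, sum_mul_sum, sum_mul]
  simp only [sum_mul, mul_sum, ← AddChar.map_add_eq_mul, ← mul_add, sub_eq_add_neg]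
  exact sum_congr rfl fun _ _ ↦ sum_comm

variable [DecidableEq R] {ψ : AddChar R ℂ}

lemma sum_expSum_mul_conj (hψ : ψ.IsPrimitive) (A : Finset R) :
    ∑ t, expSum ψ A t * conj (expSum ψ A t) = Fintype.card R * #A := by
  simp_rw [expSum_mul_conj]
  rw [sum_comm]
  simp_rw [sum_comm (s := univ), AddChar.sum_mulShift _ hψ, sub_eq_zero]
  simp [mul_comm]

lemma sum_norm_sq_expSum (hψ : ψ.IsPrimitive) (A : Finset R) :
    ∑ t, ‖expSum ψ A t‖ ^ 2 = Fintype.card R * #A := by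
  have := sum_expSum_mul_conj hψ A
  simp_rw [Complex.mul_conj, Complex.normSq_eq_norm_sq] at this
  exact_mod_cast this

lemma sum_expSum_sq_mul_conj (hψ : ψ.IsPrimitive) (A : Finset R) :
    ∑ t, expSum ψ A t ^ 2 * conj (expSum ψ A t)
      = Fintype.card R * #{xy ∈ A ×ˢ A | xy.1 + xy.2 ∈ A} := by
  simp_rw [expSum_sq_mul_conj]
  rw [sum_comm]
  simp_rw [sum_comm (s := univ), AddChar.sum_mulShift _ hψ, sub_eq_zero]
  push_cast
  simp_rw [sum_ite_eq, natCast_card_filter, mul_sum, sum_product, mul_boole]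

lemma card_sq_le_of_forall_add_notMem (hψ : ψ.IsPrimitive) {A : Finset R}
    (hA : ∀ x ∈ A, ∀ y ∈ A, x + y ∉ A) {B : ℝ} (hB : 0 ≤ B)
    (hcoeff : ∀ t ≠ 0, ‖expSum ψ A t‖ ≤ B) : (#A : ℝ) ^ 2 ≤ B * Fintype.card R := by
  have hzero : ∑ t, expSum ψ A t ^ 2 * conj (expSum ψ A t) = 0 := by
    rw [sum_expSum_sq_mul_conj hψ, filter_false_of_mem fun xy hxy ↦
      hA _ (mem_product.1 hxy).1 _ (mem_product.1 hxy).2]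
    simp
  rw [← add_sum_erase _ _ (mem_univ 0), expSum_zero] at hzero
  have hcube : (#A : ℝ) ^ 3 ≤ B * (Fintype.card R * #A) := calc
    (#A : ℝ) ^ 3 = ‖(#A : ℂ) ^ 2 * conj (#A : ℂ)‖ := by simp [pow_succ]
    _ = ‖∑ t ∈ univ.erase 0, expSum ψ A t ^ 2 * conj (expSum ψ A t)‖ := by
        rw [eq_neg_of_add_eq_zero_left hzero, norm_neg]
    _ ≤ ∑ t ∈ univ.erase 0, ‖expSum ψ A t‖ ^ 2 * ‖expSum ψ A t‖ :=
        (norm_sum_le _ _).trans_eq (by simp)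
    _ ≤ ∑ t ∈ univ.erase 0, ‖expSum ψ A t‖ ^ 2 * B :=
        sum_le_sum fun t ht ↦ by gcongr; exact hcoeff t (ne_of_mem_erase ht)
    _ ≤ ∑ t, ‖expSum ψ A t‖ ^ 2 * B :=
        sum_le_sum_of_subset_of_nonneg (erase_subset _ _) fun _ _ _ ↦ by positivity
    _ = B * (Fintype.card R * #A) := by rw [← sum_mul, sum_norm_sq_expSum hψ, mul_comm]
  rcases (#A).eq_zero_or_pos with hA0 | hApos
  · simp [hA0]
    positivity
  · have : (0 : ℝ) < #A := by exact_mod_cast hApos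
    nlinarith

end ExpSum

lemma card_le_mul_card_image_pow {K : Type*} [CommRing K] [IsDomain K] [DecidableEq K]
    (S : Finset K) {m : ℕ} (hm : 0 < m) : #S ≤ m * #(S.image (· ^ m)) :=
  card_le_mul_card_image S m fun b _ ↦ calc
    #{a ∈ S | a ^ m = b} ≤ #(Polynomial.nthRootsFinset m b) :=
      card_le_card fun a ha ↦ by simp_all [Polynomial.mem_nthRootsFinset hm]
    _ ≤ m := by
      rw [Polynomial.nthRootsFinset_def]
      exact (Multiset.toFinset_card_le _).trans (Polynomial.card_nthRoots m b)

lemma ZMod.exp_neg_two_pi_I_val_mul_val {N : ℕ} [NeZero N] (t x : ZMod N) :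
    Complex.exp (-2 * Real.pi * Complex.I * (t.val * x.val) / N) = ZMod.stdAddChar (-t * x) := by
  have hcast : ((-(t.val * x.val : ℤ) : ℤ) : ZMod N) = -t * x := by
    push_cast [ZMod.natCast_val, ZMod.cast_id]
    ring
  rw [← hcast, ZMod.stdAddChar_coe]
  congr 1
  push_cast
  ring

lemma Real.rpow_neg_one_half_mul_self {x : ℝ} (hx : 0 ≤ x) : x ^ (-(1 : ℝ) / 2) * x = √x := by
  rw [Real.sqrt_eq_rpow]
  conv_lhs => enter [2]; rw [← Real.rpow_one x]
  rw [← Real.rpow_add' hx (by norm_num)]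
  norm_num

lemma lt_pow_four_add_six_of_sub_one_le_mul {p m h : ℝ} (hp : 1 ≤ p)
    (hlow : p - 1 ≤ m * h) (hh : h ^ 2 ≤ √p * p) : p < m ^ 4 + 6 := by
  have hsq : (p - 1) ^ 2 ≤ m ^ 2 * (√p * p) := calc
    (p - 1) ^ 2 ≤ (m * h) ^ 2 := pow_le_pow_left₀ (by linarith) hlow 2
    _ = m ^ 2 * h ^ 2 := mul_pow m h 2
    _ ≤ m ^ 2 * (√p * p) := by gcongr
  have hfourth : (p - 1) ^ 4 ≤ m ^ 4 * p ^ 3 := calc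
    (p - 1) ^ 4 = ((p - 1) ^ 2) ^ 2 := by ring
    _ ≤ (m ^ 2 * (√p * p)) ^ 2 := pow_le_pow_left₀ (by positivity) hsq 2
    _ = m ^ 4 * p ^ 3 := by rw [mul_pow, mul_pow, Real.sq_sqrt (by linarith)]; ring
  by_contra! hbig
  have hcube : 0 ≤ p ^ 3 := by positivity
  nlinarith [mul_le_mul_of_nonneg_right (show m ^ 4 ≤ p - 6 by linarith) hcube]

theorem stmt_8_general (p m : ℕ) (hp : Nat.Prime p) (hm : 0 < m)
    (H : Finset (ZMod p))
    (hH : ∀ x : ZMod p, x ∈ H ↔ ∃ y : ZMod p, y ≠ 0 ∧ y ^ m = x)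
    (huniform : ∀ t : ZMod p, t ≠ 0 →
      ‖∑ x ∈ H, Complex.exp (-2 * Real.pi * Complex.I * (t.val * x.val) / p)‖
        ≤ (p : ℝ) ^ (-(1 : ℝ) / 2) * p)
    (hbig : p > m ^ 4 + 5) :
    ∃ x ∈ H, ∃ y ∈ H, ∃ z ∈ H, x + y = z := by
  have := Fact.mk hp
  by_contra! hsumfree
  have hcoeff : ∀ t ≠ 0, ‖expSum ZMod.stdAddChar H t‖ ≤ √p := fun t ht ↦ by
    have := huniform (-t) (neg_ne_zero.2 ht)
    simp_rw [ZMod.exp_neg_two_pi_I_val_mul_val, neg_neg,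
      Real.rpow_neg_one_half_mul_self (Nat.cast_nonneg p)] at this
    exact this
  have hsq : (#H : ℝ) ^ 2 ≤ √p * p := by
    simpa using card_sq_le_of_forall_add_notMem (ZMod.isPrimitive_stdAddChar p)
      (fun x hx y hy hxy ↦ hsumfree x hx y hy _ hxy rfl) (Real.sqrt_nonneg _) hcoeff
  have hH_eq : H = (univ.erase 0).image (· ^ m) := by
    ext x
    simp [hH]
  have hcard : p - 1 ≤ m * #H := by
    simpa [hH_eq, card_erase_of_mem] using card_le_mul_card_image_pow (univ.erase (0 : ZMod p)) hm
  have hlow : (p : ℝ) - 1 ≤ m * #H := by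
    rw [← Nat.cast_one, ← Nat.cast_sub hp.one_le]
    exact_mod_cast hcard
  have := lt_pow_four_add_six_of_sub_one_le_mul (by exact_mod_cast hp.one_le) hlow hsq
  norm_cast at this
  omega

theorem stmt_8 (p m : ℕ) (hp : Nat.Prime p) (hm : 0 < m)
    (hdvd : m ∣ (p - 1) / 2) (heven : Even ((p - 1) / m))
    (H : Finset (ZMod p))
    (hH : ∀ x : ZMod p, x ∈ H ↔ ∃ y : ZMod p, y ≠ 0 ∧ y ^ m = x)
    (huniform : ∀ t : ZMod p, t ≠ 0 →
      ‖∑ x ∈ H, Complex.exp (-2 * Real.pi * Complex.I * (t.val * x.val) / p)‖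
        ≤ (p : ℝ) ^ (-(1 : ℝ) / 2) * p)
    (hbig : p > m ^ 4 + 5) :
    ∃ x ∈ H, ∃ y ∈ H, ∃ z ∈ H, x + y = z :=
  stmt_8_general p m hp hm H hH huniform hbig
end

section
/- Let m > 6 and suppose p ≡ 1 (mod 2m) is prime with (p-1)/m even, and the index-m multiplicative cosets X_0, ..., X_{m-1} of (Z/pZ)^× satisfy X_0 + X_0 = (Z/pZ) \ X_0. Then p ≥ 2m² − 2m + 1. -/
open Pointwise

theorem arith_aux' (m p n c k0 : ℕ) (hm : 7 ≤ m) (hk0 : 1 ≤ k0)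
    (hneq : n = 2 * k0) (hpn : p - 1 = m * n) (hp2m : p ≥ 2 * m + 1)
    (hcn : c ≤ n) (h1 : 2 * (p - c) ≤ c * (c + 1)) :
    p ≥ 2 * m ^ 2 - 2 * m + 1 := by
  have hpval : p = m * n + 1 := by omega
  have hcp : c ≤ p := by nlinarith
  have h2 : 2 * p ≤ n * (n + 1) + 2 * n := by
    have h3 : c * (c + 1) ≤ n * (n + 1) := Nat.mul_le_mul hcn (by omega)
    omega
  have hkm : k0 + 1 ≥ m := by
    by_contra h
    push_neg at h
    rw [hpval, hneq] at h2
    nlinarith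
  have h4 : 2 * m ^ 2 ≤ m * (2 * k0) + 2 * m := by nlinarith
  rw [hpval, hneq]
  omega

theorem stmt_11 (m p : ℕ) (hm : m > 6) (hp : Nat.Prime p)
    (hmod : p % (2 * m) = 1) (heven : Even ((p - 1) / m))
    (X0 : Set (ZMod p))
    (hX0 : X0 = {x | ∃ y : ZMod p, y ≠ 0 ∧ y ^ m = x})
    (hsum : X0 + X0 = X0ᶜ) :
    p ≥ 2 * m ^ 2 - 2 * m + 1 := by
  classical
  haveI : Fact p.Prime := ⟨hp⟩
  have hm0 : 0 < m := by omega
  obtain ⟨k0, hk0⟩ : ∃ k0, p = 2 * m * k0 + 1 := ⟨p / (2 * m), by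
    have := Nat.div_add_mod p (2 * m); omega⟩
  have hk0pos : 1 ≤ k0 := by
    rcases Nat.eq_zero_or_pos k0 with h | h
    · exfalso; rw [h] at hk0; simp at hk0; exact hp.one_lt.ne' hk0
    · exact h
  have hp2m : p ≥ 2 * m + 1 := by nlinarith
  obtain ⟨n, hpn, hneq⟩ : ∃ n : ℕ, p - 1 = m * n ∧ n = 2 * k0 := by
    refine ⟨2 * k0, ?_, rfl⟩
    have h : m * (2 * k0) = 2 * m * k0 := by ring
    omega
  -- units of ZMod p
  have hcardu : Nat.card (ZMod p)ˣ = p - 1 := by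
    simp [Nat.card_eq_fintype_card, ZMod.card_units_eq_totient, Nat.totient_prime hp]
  obtain ⟨g, hg⟩ := IsCyclic.exists_ofOrder_eq_natCard (α := (ZMod p)ˣ)
  rw [hcardu] at hg
  set ζu : (ZMod p)ˣ := g ^ n with hζu
  have hordζ : orderOf ζu = m := by
    rw [hζu, orderOf_pow, hg]
    have h1 : Nat.gcd (p - 1) n = n := Nat.gcd_eq_right ⟨m, by rw [hpn, mul_comm]⟩
    have hnpos : 0 < n := by rw [hneq]; omega
    rw [h1, hpn, Nat.mul_div_assoc m (dvd_refl n), Nat.div_self hnpos, mul_one]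
  set ζ : ZMod p := (ζu : ZMod p) with hζ
  have hζm : ζ ^ m = 1 := by
    rw [hζ, ← Units.val_pow_eq_pow_val, ← hordζ, pow_orderOf_eq_one, Units.val_one]
  have hζ0 : ζ ≠ 0 := Units.ne_zero ζu
  -- Finset setup
  set s : Finset (ZMod p) := Finset.univ.erase 0 with hs
  have hscard : s.card = p - 1 := by
    rw [hs, Finset.card_erase_of_mem (Finset.mem_univ 0), Finset.card_univ, ZMod.card]
  set t : Finset (ZMod p) := s.image (· ^ m) with ht
  have htX0 : (t : Set (ZMod p)) = X0 := by
    ext x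
    simp [ht, hs, hX0, Finset.mem_image, eq_comm]
  -- m * t.card ≤ p - 1
  have hfib : ∀ b ∈ t, m ≤ (s.filter fun a => a ^ m = b).card := by
    intro b hb
    rw [ht, Finset.mem_image] at hb
    obtain ⟨y, hy, hyb⟩ := hb
    have hy0 : y ≠ 0 := by rw [hs] at hy; exact (Finset.mem_erase.1 hy).1
    have hsub : (Finset.range m).image (fun k => y * ζ ^ k) ⊆
        s.filter fun a => a ^ m = b := by
      intro a ha
      rw [Finset.mem_image] at ha
      obtain ⟨k, _, rfl⟩ := ha
      refine Finset.mem_filter.2 ⟨?_, ?_⟩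
      · rw [hs, Finset.mem_erase]
        exact ⟨mul_ne_zero hy0 (pow_ne_zero _ hζ0), Finset.mem_univ _⟩
      · rw [mul_pow, ← pow_mul, mul_comm k m, pow_mul, hζm, one_pow, mul_one, hyb]
    have hinj : Set.InjOn (fun k => y * ζ ^ k) (Finset.range m) := by
      intro i hi j hj hij
      simp only [Finset.coe_range, Set.mem_Iio] at hi hj
      have h1 : ζ ^ i = ζ ^ j := mul_left_cancel₀ hy0 hij
      have h2 : ζu ^ i = ζu ^ j := by
        apply Units.ext
        simpa [Units.val_pow_eq_pow_val] using h1
      exact pow_injOn_Iio_orderOf (by rwa [Set.mem_Iio, hordζ])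
        (by rwa [Set.mem_Iio, hordζ]) h2
    calc m = ((Finset.range m).image (fun k => y * ζ ^ k)).card := by
          rw [Finset.card_image_of_injOn hinj, Finset.card_range]
      _ ≤ _ := Finset.card_le_card hsub
  have hmt : m * t.card ≤ p - 1 := by
    rw [← hscard]
    exact Finset.mul_card_image_le_card s m hfib
  set c : ℕ := t.card with hc
  have hcn : c ≤ n := by
    rw [hpn] at hmt
    exact Nat.le_of_mul_le_mul_left hmt hm0
  -- sumset bound
  have hX0fin : X0.toFinset = t := by
    ext x; rw [Set.mem_toFinset, ← htX0]; simp
  have hsumcard : (X0 + X0).toFinset.card ≤ (c + 1).choose 2 := by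
    have hsub : (X0 + X0).toFinset ⊆
        t.sym2.image (Sym2.lift ⟨fun a b => a + b, fun a b => add_comm a b⟩) := by
      intro x hx
      rw [Set.mem_toFinset] at hx
      obtain ⟨a, ha, b, hb, rfl⟩ := Set.mem_add.1 hx
      rw [Finset.mem_image]
      refine ⟨s(a, b), ?_, by simp⟩
      rw [Finset.mk_mem_sym2_iff]
      constructor
      · rw [← Set.mem_toFinset, hX0fin] at ha; exact ha
      · rw [← Set.mem_toFinset, hX0fin] at hb; exact hb
    calc (X0 + X0).toFinset.card ≤ _ := Finset.card_le_card hsub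
      _ ≤ t.sym2.card := Finset.card_image_le
      _ = (c + 1).choose 2 := Finset.card_sym2 t
  -- compl card
  have hcompl : (X0ᶜ).toFinset.card = p - c := by
    rw [Set.toFinset_compl, Finset.card_compl, hX0fin, ZMod.card]
  have hft : (X0 + X0).toFinset = X0ᶜ.toFinset := by
    ext x
    rw [Set.mem_toFinset, Set.mem_toFinset, hsum]
  have hkey : p - c ≤ (c + 1).choose 2 := by
    rw [← hcompl, ← hft]; exact hsumcard
  -- arithmetic
  have hchoose : 2 * ((c + 1).choose 2) = c * (c + 1) := by
    rw [Nat.choose_two_right]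
    have : (c + 1) * (c + 1 - 1) = c * (c + 1) := by rw [Nat.add_sub_cancel, mul_comm]
    rw [this, Nat.mul_div_cancel' (even_iff_two_dvd.mp (Nat.even_mul_succ_self c))]
  have h1 : 2 * (p - c) ≤ c * (c + 1) := by
    calc 2 * (p - c) ≤ 2 * ((c + 1).choose 2) := Nat.mul_le_mul_left 2 hkey
      _ = c * (c + 1) := hchoose
  exact arith_aux' m p n c k0 (by omega) hk0pos hneq hpn hp2m hcn h1
end
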